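/- arXiv:2004.02468 — 6 statements merged into one kernel-verified Lean document; each statement's English description precedes it below -/
import Mathlib

section
/- Let I be a finite nonempty index set; for each C ∈ I let s_C ≥ 1 be an integer and let F_C, G_C : ℝ → ℝ be real trigonometric polynomials, and let λ > 0 be real. Then there exists a polynomial p ∈ ℂ[U, V, W], monic of degree s := Σ_{C∈I} s_C in U, such that for all u ∈ ℂ and all t ∈ ℝ: ∏_{C∈I} ∏_{j=1}^{s_C} ( u − λ·( F_C((t + 2π(j−1))/s_C) + i·G_C((t + 2π(j−1))/s_C) ) ) = p(u, exp(i t), exp(−i t)). -/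
open Finset Complex Real

/-- A real trigonometric polynomial:
`T(t) = a₀ + ∑_{k=1}^{N} (a_k cos(kt) + b_k sin(kt))`. -/
def IsRealTrigPoly (T : ℝ → ℝ) : Prop :=
  ∃ (N : ℕ) (a b : ℕ → ℝ), ∀ t : ℝ,
    T t = a 0 + ∑ k ∈ Finset.Icc 1 N, (a k * Real.cos (k * t) + b k * Real.sin (k * t))

/-! With `h = λ (F + i G)`, a Laurent polynomial in `e^{it}`, the strands
`t ↦ h ((t + 2πj) / s)`, `j < s`, are Laurent polynomials in `e^{it/s}`, and the shift
`t ↦ t + 2π` permutes them cyclically. Hence every coefficient of `∏_j (u - strand_j)` is a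
`2π`-periodic Laurent polynomial in `e^{it/s}`. Averaging over the shifts by `2πm`, `m < s`,
fixes periodic functions and kills each `e^{ikt/s}` with `s ∤ k` (a geometric sum of roots of
unity), so these coefficients are Laurent polynomials in `e^{it}`, i.e. polynomials in `e^{it}`
and `e^{-it}`. -/

namespace Polynomial

variable {R : Type*} [CommRing R]

lemma map_prod_X_sub_C_of_cyclic (τ : R →+* R) (r : ℕ → R) (n : ℕ)
    (hτ : ∀ j, τ (r j) = r (j + 1)) (hn : r n = r 0) :
    (∏ j ∈ range n, (X - C (r j))).map τ = ∏ j ∈ range n, (X - C (r j)) := by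
  simp only [Polynomial.map_prod, Polynomial.map_sub, map_X, map_C, hτ]
  cases n with
  | zero => rfl
  | succ n => rw [prod_range_succ, prod_range_succ' (fun j => X - C (r j)), hn]

lemma coeff_prod_X_sub_C_mem (S : Subring R) {r : ℕ → R} (hr : ∀ j, r j ∈ S)
    (n k : ℕ) : (∏ j ∈ range n, (X - C (r j))).coeff k ∈ S := by
  have : ∏ j ∈ range n, (X - C (r j)) =
      (∏ j ∈ range n, (X - C (⟨r j, hr j⟩ : S))).map S.subtype := by
    simp [Polynomial.map_prod]
  rw [this, coeff_map]
  exact SetLike.coe_mem _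

end Polynomial

noncomputable section

def compRightAlgHom {α β : Type*} (R A : Type*) [CommSemiring R] [Semiring A] [Algebra R A]
    (g : α → β) : (β → A) →ₐ[R] (α → A) :=
  AlgHom.pi fun a => Pi.evalAlgHom R (fun _ => A) (g a)

@[simp]
lemma compRightAlgHom_apply {α β : Type*} (R A : Type*) [CommSemiring R] [Semiring A]
    [Algebra R A] (g : α → β) (f : β → A) (a : α) : compRightAlgHom R A g f a = f (g a) :=
  rfl

def scaledChar (s : ℕ) (k : ℤ) (t : ℝ) : ℂ := exp (I * t / s) ^ k

def trigAlgebra (s : ℕ) : Subalgebra ℂ (ℝ → ℂ) := Algebra.adjoin ℂ (Set.range (scaledChar s))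

lemma scaledChar_zero (s : ℕ) : scaledChar s 0 = 1 := by
  funext t; simp [scaledChar]

lemma scaledChar_add (s : ℕ) (k l : ℤ) :
    scaledChar s (k + l) = scaledChar s k * scaledChar s l := by
  funext t; simp [scaledChar, zpow_add₀ (Complex.exp_ne_zero _)]

lemma scaledChar_mem_trigAlgebra (s : ℕ) (k : ℤ) : scaledChar s k ∈ trigAlgebra s :=
  Algebra.subset_adjoin ⟨k, rfl⟩

lemma trigAlgebra_toSubmodule (s : ℕ) :
    Subalgebra.toSubmodule (trigAlgebra s) = Submodule.span ℂ (Set.range (scaledChar s)) := by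
  refine Algebra.adjoin_eq_span_of_subset ℂ fun f hf => Submodule.subset_span ?_
  induction hf using Submonoid.closure_induction with
  | mem f hf => exact hf
  | one => exact ⟨0, scaledChar_zero s⟩
  | mul _ _ _ _ hf hg =>
    obtain ⟨k, rfl⟩ := hf
    obtain ⟨l, rfl⟩ := hg
    exact ⟨k + l, scaledChar_add s k l⟩

lemma periodic_of_mem_trigAlgebra_one {f : ℝ → ℂ} (hf : f ∈ trigAlgebra 1) :
    Function.Periodic f (2 * π) := by
  have hle : trigAlgebra 1 ≤
      AlgHom.equalizer (compRightAlgHom ℂ ℂ (· + 2 * π)) (AlgHom.id ℂ _) := by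
    refine AlgHom.adjoin_le_equalizer _ _ ?_
    rintro _ ⟨k, rfl⟩
    funext t
    simp only [compRightAlgHom_apply, AlgHom.id_apply, scaledChar]
    push_cast
    rw [div_one, div_one, mul_add, mul_comm I (2 * π : ℂ), exp_periodic]
  exact fun t => congrFun (hle hf) t

lemma comp_affine_mem_trigAlgebra {h : ℝ → ℂ} (hh : h ∈ trigAlgebra 1) (s : ℕ) (c : ℝ) :
    (fun t => h ((t + c) / s)) ∈ trigAlgebra s := by
  suffices (trigAlgebra 1).map (compRightAlgHom ℂ ℂ fun t => (t + c) / s) ≤ trigAlgebra s from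
    this ⟨h, hh, rfl⟩
  rw [trigAlgebra, AlgHom.map_adjoin, Algebra.adjoin_le_iff]
  rintro _ ⟨_, ⟨k, rfl⟩, rfl⟩
  have : compRightAlgHom ℂ ℂ (fun t => (t + c) / s) (scaledChar 1 k) =
      exp (I * c / s) ^ k • scaledChar s k := by
    funext t
    simp only [compRightAlgHom_apply, Pi.smul_apply, smul_eq_mul, scaledChar, ← mul_zpow,
      ← Complex.exp_add]
    push_cast
    ring_nf
  rw [this]
  exact Subalgebra.smul_mem _ (scaledChar_mem_trigAlgebra s k) _

def shiftAverage (s : ℕ) : (ℝ → ℂ) →ₗ[ℂ] (ℝ → ℂ) :=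
  (s : ℂ)⁻¹ • ∑ m ∈ range s, (compRightAlgHom ℂ ℂ (· + 2 * π * m)).toLinearMap

lemma shiftAverage_apply (s : ℕ) (f : ℝ → ℂ) (t : ℝ) :
    shiftAverage s f t = (s : ℂ)⁻¹ * ∑ m ∈ range s, f (t + 2 * π * m) := by
  simp [shiftAverage, Finset.sum_apply]

lemma shiftAverage_of_periodic {s : ℕ} (hs : s ≠ 0) {f : ℝ → ℂ}
    (hf : Function.Periodic f (2 * π)) : shiftAverage s f = f := by
  funext t
  have hshift (m : ℕ) : f (t + 2 * π * m) = f t := by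
    rw [mul_comm]
    exact hf.nat_mul m t
  simp [shiftAverage_apply, hshift, hs]

lemma scaledChar_add_two_pi_mul (s : ℕ) (k : ℤ) (t : ℝ) (m : ℕ) :
    scaledChar s k (t + 2 * π * m) = (exp (2 * π * I / s) ^ k) ^ m * scaledChar s k t := by
  have : exp (I * ↑(t + 2 * π * m) / s) = exp (2 * π * I / s) ^ m * exp (I * t / s) := by
    rw [← Complex.exp_nat_mul, ← Complex.exp_add]
    push_cast
    ring_nf
  rw [scaledChar, scaledChar, this, mul_zpow, ← zpow_natCast, ← zpow_natCast, ← zpow_mul,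
    ← zpow_mul, mul_comm k]

lemma scaledChar_natCast_mul {s : ℕ} (hs : s ≠ 0) (l : ℤ) :
    scaledChar s (s * l) = scaledChar 1 l := by
  funext t
  rw [scaledChar, scaledChar, zpow_mul, zpow_natCast, ← Complex.exp_nat_mul]
  congr 2
  rw [Nat.cast_one, div_one]
  field_simp

lemma shiftAverage_scaledChar_mem {s : ℕ} (hs : s ≠ 0) (k : ℤ) :
    shiftAverage s (scaledChar s k) ∈ trigAlgebra 1 := by
  set ζ := exp (2 * π * I / s) ^ k with hζ_def
  have hprim := Complex.isPrimitiveRoot_exp s hs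
  have havg : shiftAverage s (scaledChar s k) =
      ((s : ℂ)⁻¹ * ∑ m ∈ range s, ζ ^ m) • scaledChar s k := by
    funext t
    rw [Pi.smul_apply, smul_eq_mul, shiftAverage_apply]
    simp_rw [scaledChar_add_two_pi_mul]
    rw [← Finset.sum_mul, ← mul_assoc]
  rw [havg]
  by_cases hζ : ζ = 1
  · obtain ⟨l, rfl⟩ := (hprim.zpow_eq_one_iff_dvd k).1 hζ
    rw [scaledChar_natCast_mul hs]
    exact Subalgebra.smul_mem _ (scaledChar_mem_trigAlgebra 1 l) _
  · have hζs : ζ ^ s = 1 := by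
      rw [hζ_def, ← zpow_natCast, ← zpow_mul, mul_comm k, zpow_mul, zpow_natCast,
        hprim.pow_eq_one, one_zpow]
    rw [geom_sum_eq hζ, hζs, sub_self, zero_div, mul_zero, zero_smul]
    exact zero_mem _

lemma shiftAverage_mem {s : ℕ} (hs : s ≠ 0) {f : ℝ → ℂ} (hf : f ∈ trigAlgebra s) :
    shiftAverage s f ∈ trigAlgebra 1 := by
  have : Submodule.span ℂ (Set.range (scaledChar s)) ≤
      (Subalgebra.toSubmodule (trigAlgebra 1)).comap (shiftAverage s) :=
    Submodule.span_le.2 <| Set.range_subset_iff.2 (shiftAverage_scaledChar_mem hs)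
  exact this (trigAlgebra_toSubmodule s ▸ hf)

lemma mem_trigAlgebra_one_of_periodic {s : ℕ} (hs : s ≠ 0) {f : ℝ → ℂ}
    (hf : f ∈ trigAlgebra s) (hper : Function.Periodic f (2 * π)) : f ∈ trigAlgebra 1 :=
  shiftAverage_of_periodic hs hper ▸ shiftAverage_mem hs hf

def braidStrand (h : ℝ → ℂ) (s j : ℕ) (t : ℝ) : ℂ := h ((t + 2 * π * j) / s)

open Polynomial in
def braidPoly (h : ℝ → ℂ) (s : ℕ) : (ℝ → ℂ)[X] := ∏ j ∈ range s, (X - C (braidStrand h s j))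

section BraidPoly

open Polynomial

variable (h : ℝ → ℂ) (s : ℕ)

lemma braidPoly_monic : (braidPoly h s).Monic :=
  monic_prod_of_monic _ _ fun _ _ => monic_X_sub_C _

lemma natDegree_braidPoly : (braidPoly h s).natDegree = s := by
  rw [braidPoly, natDegree_prod_of_monic _ _ fun _ _ => monic_X_sub_C _]
  simp

lemma eval₂_braidPoly (u : ℂ) (t : ℝ) :
    (braidPoly h s).eval₂ (Pi.evalRingHom _ t) u = ∏ j ∈ range s, (u - braidStrand h s j t) := by
  simp [braidPoly, eval₂_finsetProd]

lemma compRightAlgHom_braidStrand (j : ℕ) :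
    compRightAlgHom ℂ ℂ (· + 2 * π) (braidStrand h s j) = braidStrand h s (j + 1) := by
  funext t
  simp only [compRightAlgHom_apply, braidStrand]
  push_cast
  ring_nf

variable {h s}

lemma braidStrand_self (hs : s ≠ 0) (hh : Function.Periodic h (2 * π)) :
    braidStrand h s s = braidStrand h s 0 := by
  funext t
  simp only [braidStrand, Nat.cast_zero, mul_zero, add_zero]
  rw [add_div, mul_div_cancel_right₀ _ (Nat.cast_ne_zero.2 hs), hh]

lemma coeff_braidPoly_mem (hh : h ∈ trigAlgebra 1) (k : ℕ) :
    (braidPoly h s).coeff k ∈ trigAlgebra 1 := by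
  rcases eq_or_ne s 0 with rfl | hs
  · simp only [braidPoly, range_zero, prod_empty, coeff_one]
    split_ifs <;> simp
  have hcoeff : (braidPoly h s).coeff k ∈ trigAlgebra s := coeff_prod_X_sub_C_mem
    (trigAlgebra s).toSubring (fun j => comp_affine_mem_trigAlgebra hh s (2 * π * j)) s k
  refine mem_trigAlgebra_one_of_periodic hs hcoeff fun t => ?_
  have hcyc := map_prod_X_sub_C_of_cyclic (compRightAlgHom ℂ ℂ (· + 2 * π)).toRingHom
    (braidStrand h s) s (compRightAlgHom_braidStrand h s)
    (braidStrand_self hs (periodic_of_mem_trigAlgebra_one hh))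
  calc (braidPoly h s).coeff k (t + 2 * π)
      = ((braidPoly h s).map (compRightAlgHom ℂ ℂ (· + 2 * π)).toRingHom).coeff k t := by
        rw [coeff_map]; rfl
    _ = (braidPoly h s).coeff k t := by rw [braidPoly, hcyc]

end BraidPoly

lemma scaledChar_one_eq_exp (k : ℤ) (t : ℝ) : scaledChar 1 k t = exp (k * t * I) := by
  rw [scaledChar, ← Complex.exp_int_mul]
  push_cast
  ring_nf

lemma ofReal_cos_mul_mem_trigAlgebra (k : ℕ) :
    (fun t : ℝ => (Real.cos (k * t) : ℂ)) ∈ trigAlgebra 1 := by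
  have : (fun t : ℝ => (Real.cos (k * t) : ℂ)) =
      (2⁻¹ : ℂ) • (scaledChar 1 k + scaledChar 1 (-k)) := by
    funext t
    simp only [Pi.smul_apply, Pi.add_apply, smul_eq_mul, scaledChar_one_eq_exp]
    have := Complex.two_cos (k * t)
    push_cast
    simp only [neg_mul] at this ⊢
    linear_combination (2⁻¹ : ℂ) * this
  rw [this]
  exact Subalgebra.smul_mem _
    (add_mem (scaledChar_mem_trigAlgebra 1 _) (scaledChar_mem_trigAlgebra 1 _)) _

lemma ofReal_sin_mul_mem_trigAlgebra (k : ℕ) :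
    (fun t : ℝ => (Real.sin (k * t) : ℂ)) ∈ trigAlgebra 1 := by
  have : (fun t : ℝ => (Real.sin (k * t) : ℂ)) =
      (I / 2) • (scaledChar 1 (-k) - scaledChar 1 k) := by
    funext t
    simp only [Pi.smul_apply, Pi.sub_apply, smul_eq_mul, scaledChar_one_eq_exp]
    have := Complex.two_sin (k * t)
    push_cast
    simp only [neg_mul] at this ⊢
    linear_combination (2⁻¹ : ℂ) * this
  rw [this]
  exact Subalgebra.smul_mem _
    (sub_mem (scaledChar_mem_trigAlgebra 1 _) (scaledChar_mem_trigAlgebra 1 _)) _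

lemma IsRealTrigPoly.ofReal_comp_mem_trigAlgebra {T : ℝ → ℝ} (hT : IsRealTrigPoly T) :
    (fun t => (T t : ℂ)) ∈ trigAlgebra 1 := by
  obtain ⟨N, a, b, hT⟩ := hT
  have : (fun t => (T t : ℂ)) = algebraMap ℂ _ (a 0) + ∑ k ∈ Icc 1 N,
      ((a k : ℂ) • (fun t : ℝ => (Real.cos (k * t) : ℂ))
        + (b k : ℂ) • fun t : ℝ => (Real.sin (k * t) : ℂ)) := by
    funext t
    simp [hT, Finset.sum_apply]
  rw [this]
  exact add_mem (Subalgebra.algebraMap_mem _ _) (Subalgebra.sum_mem _ fun k _ =>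
    add_mem (Subalgebra.smul_mem _ (ofReal_cos_mul_mem_trigAlgebra k) _)
      (Subalgebra.smul_mem _ (ofReal_sin_mul_mem_trigAlgebra k) _))

def evalExpI : MvPolynomial (Fin 2) ℂ →ₐ[ℂ] (ℝ → ℂ) :=
  MvPolynomial.aeval ![fun t => exp (I * t), fun t => exp (-(I * t))]

lemma evalExpI_apply (p : MvPolynomial (Fin 2) ℂ) (t : ℝ) :
    evalExpI p t = MvPolynomial.eval ![exp (I * t), exp (-(I * t))] p := by
  induction p using MvPolynomial.induction_on with
  | C a => simp [evalExpI]
  | add p q hp hq => simp [hp, hq]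
  | mul_X p i hp =>
    rw [map_mul, Pi.mul_apply, hp]
    fin_cases i <;> simp [evalExpI]

lemma trigAlgebra_one_le_range_evalExpI : trigAlgebra 1 ≤ evalExpI.range := by
  have hX₀ : evalExpI (.X 0) = scaledChar 1 1 := by
    funext t; simp [evalExpI, scaledChar]
  have hX₁ : evalExpI (.X 1) = scaledChar 1 (-1) := by
    funext t; simp [evalExpI, scaledChar, Complex.exp_neg]
  refine Algebra.adjoin_le ?_
  rintro _ ⟨k, rfl⟩
  induction k using Int.induction_on with
  | zero => exact scaledChar_zero 1 ▸ one_mem _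
  | succ k hk => exact scaledChar_add 1 k 1 ▸ mul_mem hk ⟨_, hX₀⟩
  | pred k hk =>
    rw [sub_eq_add_neg, scaledChar_add]
    exact mul_mem hk ⟨_, hX₁⟩

end

theorem braid_product_is_polynomial_general {ι : Type*} [Fintype ι]
    (s : ι → ℕ)
    (F G : ι → ℝ → ℝ) (hF : ∀ C, IsRealTrigPoly (F C)) (hG : ∀ C, IsRealTrigPoly (G C))
    (lam : ℝ) :
    ∃ p : Polynomial (MvPolynomial (Fin 2) ℂ), p.Monic ∧ p.natDegree = ∑ C, s C ∧
      ∀ (u : ℂ) (t : ℝ),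
        (∏ C, ∏ j ∈ Finset.range (s C),
          (u - (lam : ℂ) * ((F C ((t + 2 * Real.pi * (j : ℝ)) / (s C : ℝ)) : ℂ)
            + Complex.I * (G C ((t + 2 * Real.pi * (j : ℝ)) / (s C : ℝ)) : ℂ)))) =
        Polynomial.eval₂
          (MvPolynomial.eval ![Complex.exp (Complex.I * (t : ℂ)),
            Complex.exp (-(Complex.I * (t : ℂ)))]) u p := by
  set h : ι → ℝ → ℂ := fun C x => lam * (F C x + I * G C x)
  have hh (C : ι) : h C ∈ trigAlgebra 1 :=
    Subalgebra.smul_mem _ (add_mem (hF C).ofReal_comp_mem_trigAlgebra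
      (Subalgebra.smul_mem _ (hG C).ofReal_comp_mem_trigAlgebra I)) (lam : ℂ)
  have hmonic (C : ι) := braidPoly_monic (h C) (s C)
  have hlifts : ∏ C, braidPoly (h C) (s C) ∈ Polynomial.lifts evalExpI.toRingHom :=
    prod_mem fun C _ => (Polynomial.lifts_iff_coeff_lifts _).2 fun k =>
      trigAlgebra_one_le_range_evalExpI (coeff_braidPoly_mem (hh C) k)
  obtain ⟨p, hp, hdeg, hp_monic⟩ := Polynomial.lifts_and_natDegree_eq_and_monic hlifts
    (Polynomial.monic_prod_of_monic _ _ fun C _ => hmonic C)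
  refine ⟨p, hp_monic, ?_, fun u t => ?_⟩
  · rw [hdeg, Polynomial.natDegree_prod_of_monic _ _ fun C _ => hmonic C]
    simp only [natDegree_braidPoly]
  · have heval : MvPolynomial.eval ![exp (I * t), exp (-(I * t))] =
        (Pi.evalRingHom _ t).comp evalExpI.toRingHom :=
      RingHom.ext fun q => (evalExpI_apply q t).symm
    rw [heval, ← Polynomial.eval₂_map, hp, Polynomial.eval₂_finsetProd]
    simp only [eval₂_braidPoly]
    rfl

/-- The braid product
`∏_C ∏_{j=1}^{s_C} (u − λ(F_C((t+2π(j−1))/s_C) + i G_C((t+2π(j−1))/s_C)))`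
is a polynomial in `u`, `exp(it)` and `exp(−it)`, monic of degree `s = ∑_C s_C` in `u`. -/
theorem braid_product_is_polynomial {ι : Type*} [Fintype ι] [Nonempty ι]
    (s : ι → ℕ) (hs : ∀ C, 1 ≤ s C)
    (F G : ι → ℝ → ℝ) (hF : ∀ C, IsRealTrigPoly (F C)) (hG : ∀ C, IsRealTrigPoly (G C))
    (lam : ℝ) (hlam : 0 < lam) :
    ∃ p : Polynomial (MvPolynomial (Fin 2) ℂ), p.Monic ∧ p.natDegree = ∑ C, s C ∧
      ∀ (u : ℂ) (t : ℝ),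
        (∏ C, ∏ j ∈ Finset.range (s C),
          (u - (lam : ℂ) * ((F C ((t + 2 * Real.pi * (j : ℝ)) / (s C : ℝ)) : ℂ)
            + Complex.I * (G C ((t + 2 * Real.pi * (j : ℝ)) / (s C : ℝ)) : ℂ)))) =
        Polynomial.eval₂
          (MvPolynomial.eval ![Complex.exp (Complex.I * (t : ℂ)),
            Complex.exp (-(Complex.I * (t : ℂ)))]) u p :=
  braid_product_is_polynomial_general s F G hF hG lam
end

section
/- Let I be a finite nonempty index set; for each C ∈ I let s_C ≥ 1 be an integer and let F_C, G_C, H_C : ℝ → ℝ and R_C : ℝ → ℝ be real trigonometric polynomials with R_C(τ) > 0 for all τ. For C ∈ I, 1 ≤ j ≤ s_C, and τ_j := (t + 2π(j−1))/s_C, set P_{C,j}(x,y,z,t) = (x − F_C(τ_j))² + (y − G_C(τ_j))² − R_C(τ_j)² + i·(z − H_C(τ_j)). Then there exists a polynomial p ∈ ℂ[X, Y, Z, V, W] such that for all x, y, z, t ∈ ℝ: ∏_{C∈I} ∏_{j=1}^{s_C} P_{C,j}(x, y, z, t) = p(x, y, z, exp(i t), exp(−i t)). -/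
open Finset Complex Real

/-!
Put `w = e^{it/s}` and `ζ = e^{2πi/s}`. A real trigonometric polynomial is a linear combination of
characters `τ ↦ e^{ikτ}`, and `e^{ikτ_j} = ζ^{kj} w^k`, so every factor `P_{C,j}`, and hence the
product over `j`, is a polynomial in `x, y, z, w, w⁻¹`. Replacing `t` by `t + 2π` permutes the
factors cyclically, so this product is `2π`-periodic in `t`. Averaging it over the shifts
`t + 2πl`, `0 ≤ l < s`, multiplies the monomial `w^k` by `∑_l ζ^{kl}`, which is `s` if `s ∣ k` and
`0` otherwise; the surviving powers `w^{sq} = e^{iqt}` are monomials in `e^{it}` and `e^{-it}`.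
-/

open MvPolynomial Function

theorem IsPrimitiveRoot.geom_sum_zpow {K : Type*} [Field K] {ζ : K} {n : ℕ}
    (hζ : IsPrimitiveRoot ζ n) (k : ℤ) :
    ∑ l ∈ range n, (ζ ^ k) ^ l = if (n : ℤ) ∣ k then (n : K) else 0 := by
  split_ifs with hk
  · simp [(hζ.zpow_eq_one_iff_dvd k).2 hk]
  · have hne : ζ ^ k ≠ 1 := fun h => hk ((hζ.zpow_eq_one_iff_dvd k).1 h)
    have hpow : (ζ ^ k) ^ n = 1 := by
      rw [← zpow_natCast, ← zpow_mul, mul_comm, zpow_mul, zpow_natCast, hζ.pow_eq_one, one_zpow]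
    rw [geom_sum_eq hne, hpow, sub_self, zero_div]

theorem Function.Periodic.sum_exp_eq_sum_filter_dvd {α M : Type*} [AddCommGroup M] [Module ℂ M]
    {s : ℕ} (hs : 0 < s) {S : Finset α} {k : α → ℤ} {c : α → M}
    (hper : Periodic (fun t : ℝ => ∑ a ∈ S, exp (I * t / s) ^ k a • c a) (2 * π)) (t : ℝ) :
    ∑ a ∈ S, exp (I * t / s) ^ k a • c a
      = ∑ a ∈ S with (s : ℤ) ∣ k a, exp (I * t / s) ^ k a • c a := by
  set ω := exp (2 * π * I / s)
  have hω : IsPrimitiveRoot ω s := Complex.isPrimitiveRoot_exp s hs.ne'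
  have hshift : ∀ (l : ℕ) (m : ℤ),
      exp (I * ↑(t + l * (2 * π)) / s) ^ m = (ω ^ m) ^ l * exp (I * t / s) ^ m := by
    intro l m
    have : exp (I * ↑(t + l * (2 * π)) / s) = ω ^ l * exp (I * t / s) := by
      rw [← Complex.exp_nat_mul, ← Complex.exp_add]
      congr 1
      push_cast
      ring
    rw [this, mul_zpow, ← zpow_natCast, ← zpow_natCast, ← zpow_mul, ← zpow_mul, mul_comm m]
  apply smul_right_injective M (Nat.cast_ne_zero.2 hs.ne' : (s : ℂ) ≠ 0)
  calc (s : ℂ) • ∑ a ∈ S, exp (I * t / s) ^ k a • c a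
      = ∑ l ∈ range s, ∑ a ∈ S, exp (I * ↑(t + l * (2 * π)) / s) ^ k a • c a := by
        simp only [fun l : ℕ => (hper.nat_mul l) t, sum_const, card_range, Nat.cast_smul_eq_nsmul]
    _ = ∑ a ∈ S, (∑ l ∈ range s, (ω ^ k a) ^ l) • exp (I * t / s) ^ k a • c a := by
        simp only [hshift, sum_smul, mul_smul]
        exact sum_comm
    _ = (s : ℂ) • ∑ a ∈ S with (s : ℤ) ∣ k a, exp (I * t / s) ^ k a • c a := by
        simp only [hω.geom_sum_zpow, ite_smul, zero_smul, smul_sum, sum_filter, smul_ite, smul_zero]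

theorem Function.Periodic.prod_range_div {M : Type*} [CommMonoid M] {Φ : ℝ → M} {c : ℝ}
    (hΦ : Periodic Φ c) (s : ℕ) : Periodic (fun t => ∏ j ∈ range s, Φ ((t + c * j) / s)) c := by
  intro t
  cases s with
  | zero => simp
  | succ n =>
    dsimp only
    rw [prod_range_succ, prod_range_succ']
    congr 1
    · refine prod_congr rfl fun j _ => ?_
      congr 1
      push_cast
      ring
    · rw [← hΦ ((t + c * (0 : ℕ)) / (n + 1 : ℕ))]
      congr 1
      field_simp
      push_cast
      ring

theorem Subalgebra.prod_apply₄_mem {R B α β γ δ ι : Type*} [CommSemiring R] [CommSemiring B]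
    [Algebra R B] (A : Subalgebra R (α → β → γ → δ → B)) (S : Finset ι)
    {g : ι → α → β → γ → δ → B} (hg : ∀ i ∈ S, g i ∈ A) :
    (fun x y z t => ∏ i ∈ S, g i x y z t) ∈ A := by
  convert prod_mem hg
  simp only [Finset.prod_apply]

theorem Subalgebra.sum_apply₄_mem {R B α β γ δ ι : Type*} [CommSemiring R] [CommSemiring B]
    [Algebra R B] (A : Subalgebra R (α → β → γ → δ → B)) (S : Finset ι)
    {g : ι → α → β → γ → δ → B} (hg : ∀ i ∈ S, g i ∈ A) :
    (fun x y z t => ∑ i ∈ S, g i x y z t) ∈ A := by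
  convert sum_mem hg
  simp only [Finset.sum_apply]

theorem MvPolynomial.aeval_apply₄ {R B α β γ δ σ : Type*} [CommSemiring R] [CommSemiring B]
    [Algebra R B] (g : σ → α → β → γ → δ → B) (p : MvPolynomial σ R) (x : α) (y : β) (z : γ)
    (t : δ) : aeval g p x y z t = aeval (fun i => g i x y z t) p := by
  induction p using MvPolynomial.induction_on <;> simp_all

theorem IsRealTrigPoly.periodic {T : ℝ → ℝ} (hT : IsRealTrigPoly T) : Periodic T (2 * π) := by
  obtain ⟨N, a, b, hab⟩ := hT
  intro τ
  simp only [hab, mul_add, Real.cos_add_nat_mul_two_pi, Real.sin_add_nat_mul_two_pi]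

theorem IsRealTrigPoly.mem_span_exp {T : ℝ → ℝ} (hT : IsRealTrigPoly T) :
    (fun τ => (T τ : ℂ)) ∈ Submodule.span ℂ (Set.range fun (k : ℤ) (τ : ℝ) => exp (I * k * τ)) := by
  obtain ⟨N, a, b, hab⟩ := hT
  set V := Submodule.span ℂ (Set.range fun (k : ℤ) (τ : ℝ) => exp (I * k * τ))
  have hexp (k : ℤ) : (fun τ : ℝ => exp (I * k * τ)) ∈ V := Submodule.subset_span ⟨k, rfl⟩
  have hcos (k : ℕ) : (fun τ : ℝ => (Real.cos (k * τ) : ℂ)) ∈ V := by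
    convert V.add_mem (V.smul_mem (1 / 2) (hexp k)) (V.smul_mem (1 / 2) (hexp (-k))) using 1
    funext τ
    simp only [Complex.ofReal_cos, Complex.cos, Pi.add_apply, Pi.smul_apply, smul_eq_mul]
    push_cast
    ring_nf
  have hsin (k : ℕ) : (fun τ : ℝ => (Real.sin (k * τ) : ℂ)) ∈ V := by
    convert V.sub_mem (V.smul_mem (I / 2) (hexp (-k))) (V.smul_mem (I / 2) (hexp k)) using 1
    funext τ
    simp only [Complex.ofReal_sin, Complex.sin, Pi.sub_apply, Pi.smul_apply, smul_eq_mul]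
    push_cast
    ring_nf
  have hT : (fun τ => (T τ : ℂ)) = (a 0 : ℂ) • (fun τ : ℝ => exp (I * (0 : ℤ) * τ))
      + ∑ k ∈ Icc 1 N, ((a k : ℂ) • (fun τ : ℝ => (Real.cos (k * τ) : ℂ))
        + (b k : ℂ) • (fun τ : ℝ => (Real.sin (k * τ) : ℂ))) := by
    funext τ
    simp [hab, Finset.sum_apply]
  rw [hT]
  exact V.add_mem (V.smul_mem _ (hexp 0))
    (V.sum_mem fun k _ => V.add_mem (V.smul_mem _ (hcos k)) (V.smul_mem _ (hsin k)))

noncomputable def expPolyGen (s : ℕ) : Fin 5 → ℝ → ℝ → ℝ → ℝ → ℂ :=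
  ![fun x _ _ _ => x, fun _ y _ _ => y, fun _ _ z _ => z,
    fun _ _ _ t => exp (I * t / s), fun _ _ _ t => exp (-(I * t / s))]

noncomputable def expPolySubalgebra (s : ℕ) : Subalgebra ℂ (ℝ → ℝ → ℝ → ℝ → ℂ) :=
  Algebra.adjoin ℂ (Set.range (expPolyGen s))

namespace expPolySubalgebra

variable {s : ℕ}

theorem expPolyGen_mem (i : Fin 5) : expPolyGen s i ∈ expPolySubalgebra s :=
  Algebra.subset_adjoin (Set.mem_range_self i)

theorem exists_eval_eq {f : ℝ → ℝ → ℝ → ℝ → ℂ} (hf : f ∈ expPolySubalgebra s) :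
    ∃ p : MvPolynomial (Fin 5) ℂ, ∀ x y z t : ℝ,
      f x y z t = eval ![(x : ℂ), y, z, exp (I * t / s), exp (-(I * t / s))] p := by
  rw [expPolySubalgebra, Algebra.adjoin_range_eq_range_aeval] at hf
  obtain ⟨p, rfl⟩ := hf
  refine ⟨p, fun x y z t => ?_⟩
  rw [AlgHom.toRingHom_eq_coe, RingHom.coe_coe, aeval_apply₄, aeval_eq_eval]
  congr
  funext i
  fin_cases i <;> rfl

theorem monomial_mem (c : ℂ) (a b d : ℕ) :
    (fun (x y z _ : ℝ) => c * (x : ℂ) ^ a * (y : ℂ) ^ b * (z : ℂ) ^ d) ∈ expPolySubalgebra s := by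
  have : (fun (x y z _ : ℝ) => c * (x : ℂ) ^ a * (y : ℂ) ^ b * (z : ℂ) ^ d)
      = algebraMap ℂ _ c * expPolyGen s 0 ^ a * expPolyGen s 1 ^ b * expPolyGen s 2 ^ d := by
    funext x y z t
    simp [expPolyGen]
  rw [this]
  exact mul_mem (mul_mem (mul_mem (algebraMap_mem _ c) (pow_mem (expPolyGen_mem 0) a))
    (pow_mem (expPolyGen_mem 1) b)) (pow_mem (expPolyGen_mem 2) d)

theorem zpow_exp_mem (k : ℤ) :
    (fun (_ _ _ t : ℝ) => exp (I * t / s) ^ k) ∈ expPolySubalgebra s := by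
  obtain ⟨n, rfl | rfl⟩ := Int.eq_nat_or_neg k
  · convert pow_mem (expPolyGen_mem (s := s) 3) n
    simp [expPolyGen]
  · convert pow_mem (expPolyGen_mem (s := s) 4) n
    simp [expPolyGen, Complex.exp_neg]

theorem comp_mem_of_mem_span {g : ℝ → ℂ}
    (hg : g ∈ Submodule.span ℂ (Set.range fun (k : ℤ) (τ : ℝ) => exp (I * k * τ))) (c : ℝ) :
    (fun (_ _ _ t : ℝ) => g ((t + c) / s)) ∈ expPolySubalgebra s := by
  induction hg using Submodule.span_induction with
  | mem g hg =>
    obtain ⟨k, rfl⟩ := hg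
    convert Subalgebra.smul_mem _ (zpow_exp_mem k) (exp (I * k * c / s)) using 1
    funext x y z t
    rw [Pi.smul_apply, Pi.smul_apply, Pi.smul_apply, Pi.smul_apply, smul_eq_mul,
      ← Complex.exp_int_mul, ← Complex.exp_add]
    push_cast
    congr 1
    ring
  | zero => exact zero_mem _
  | add f g _ _ hf hg => exact add_mem hf hg
  | smul a f _ hf => exact Subalgebra.smul_mem _ hf a

theorem mem_one_of_periodic (hs : 0 < s) {f : ℝ → ℝ → ℝ → ℝ → ℂ}
    (hf : f ∈ expPolySubalgebra s) (hper : ∀ x y z, Periodic (f x y z) (2 * π)) :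
    f ∈ expPolySubalgebra 1 := by
  obtain ⟨p, hp⟩ := exists_eval_eq hf
  set k : (Fin 5 →₀ ℕ) → ℤ := fun m => (m 3 : ℤ) - m 4
  set c : (Fin 5 →₀ ℕ) → ℝ → ℝ → ℝ → ℂ :=
    fun m x y z => coeff m p * (x : ℂ) ^ m 0 * (y : ℂ) ^ m 1 * (z : ℂ) ^ m 2
  have hexpand : ∀ x y z t : ℝ,
      f x y z t = ∑ m ∈ p.support, exp (I * t / s) ^ k m • c m x y z := by
    intro x y z t
    rw [hp, eval_eq']
    refine sum_congr rfl fun m _ => ?_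
    simp only [Fin.prod_univ_five, k, c, smul_eq_mul, Complex.exp_neg,
      zpow_sub₀ (Complex.exp_ne_zero _), zpow_natCast, div_eq_mul_inv, Matrix.cons_val_zero,
      Matrix.cons_val_one, Matrix.cons_val, inv_pow]
    ring
  have hfilter : f = fun x y z (t : ℝ) =>
      ∑ m ∈ p.support with (s : ℤ) ∣ k m, exp (I * t / s) ^ k m • c m x y z := by
    funext x y z t
    rw [hexpand]
    exact Periodic.sum_exp_eq_sum_filter_dvd hs
      (fun t => by simpa only [hexpand] using hper x y z t) t
  rw [hfilter]
  refine Subalgebra.sum_apply₄_mem _ _ fun m hm => ?_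
  obtain ⟨q, hq⟩ := (mem_filter.1 hm).2
  convert mul_mem (zpow_exp_mem (s := 1) q) (monomial_mem (coeff m p) (m 0) (m 1) (m 2)) using 1
  funext x y z t
  have hpow : exp (I * t / s) ^ s = exp (I * t / (1 : ℕ)) := by
    have hs' : (s : ℂ) ≠ 0 := Nat.cast_ne_zero.2 hs.ne'
    rw [← Complex.exp_nat_mul, Nat.cast_one, div_one]
    congr 1
    field_simp
  simp only [hq, zpow_mul, zpow_natCast, hpow, smul_eq_mul, c, Pi.mul_apply]

end expPolySubalgebra

/-- The paper's `P_{C,j}(x, y, z, t)` is `loopBraidFactor F_C G_C H_C R_C x y z τ_j`. -/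
noncomputable def loopBraidFactor (F G H R : ℝ → ℝ) (x y z τ : ℝ) : ℂ :=
  (((x - F τ) ^ 2 + (y - G τ) ^ 2 - R τ ^ 2 : ℝ) : ℂ) + I * ((z - H τ : ℝ) : ℂ)

section loopBraidFactor

variable {F G H R : ℝ → ℝ}

theorem loopBraidFactor_periodic (hF : IsRealTrigPoly F) (hG : IsRealTrigPoly G)
    (hH : IsRealTrigPoly H) (hR : IsRealTrigPoly R) (x y z : ℝ) :
    Periodic (loopBraidFactor F G H R x y z) (2 * π) := by
  intro τ
  simp only [loopBraidFactor, hF.periodic τ, hG.periodic τ, hH.periodic τ, hR.periodic τ]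

theorem loopBraidFactor_comp_mem (hF : IsRealTrigPoly F) (hG : IsRealTrigPoly G)
    (hH : IsRealTrigPoly H) (hR : IsRealTrigPoly R) (s : ℕ) (c : ℝ) :
    (fun x y z t => loopBraidFactor F G H R x y z ((t + c) / s)) ∈ expPolySubalgebra s := by
  have hT {T : ℝ → ℝ} (hT : IsRealTrigPoly T) :=
    expPolySubalgebra.comp_mem_of_mem_span (s := s) hT.mem_span_exp c
  have hx := expPolySubalgebra.expPolyGen_mem (s := s) 0
  have hy := expPolySubalgebra.expPolyGen_mem (s := s) 1
  have hz := expPolySubalgebra.expPolyGen_mem (s := s) 2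
  convert add_mem (sub_mem (add_mem (pow_mem (sub_mem hx (hT hF)) 2)
    (pow_mem (sub_mem hy (hT hG)) 2)) (pow_mem (hT hR) 2))
    (mul_mem (algebraMap_mem _ I) (sub_mem hz (hT hH))) using 1
  funext x y z t
  simp [loopBraidFactor, expPolyGen]

theorem prod_loopBraidFactor_mem (hF : IsRealTrigPoly F) (hG : IsRealTrigPoly G)
    (hH : IsRealTrigPoly H) (hR : IsRealTrigPoly R) {s : ℕ} (hs : 0 < s) :
    (fun x y z t => ∏ j ∈ range s, loopBraidFactor F G H R x y z ((t + 2 * π * j) / s))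
      ∈ expPolySubalgebra 1 :=
  expPolySubalgebra.mem_one_of_periodic hs
    (Subalgebra.prod_apply₄_mem _ _ fun _ _ => loopBraidFactor_comp_mem hF hG hH hR s _)
    fun x y z => (loopBraidFactor_periodic hF hG hH hR x y z).prod_range_div s

end loopBraidFactor

theorem loop_braid_product_is_polynomial_general {ι : Type*} [Fintype ι]
    (s : ι → ℕ) (hs : ∀ C, 1 ≤ s C)
    (F G H R : ι → ℝ → ℝ)
    (hF : ∀ C, IsRealTrigPoly (F C)) (hG : ∀ C, IsRealTrigPoly (G C))
    (hH : ∀ C, IsRealTrigPoly (H C)) (hR : ∀ C, IsRealTrigPoly (R C)) :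
    ∃ p : MvPolynomial (Fin 5) ℂ,
      ∀ (x y z t : ℝ),
        (∏ C, ∏ j ∈ Finset.range (s C),
          ((((x - F C ((t + 2 * Real.pi * (j : ℝ)) / (s C : ℝ))) ^ 2
            + (y - G C ((t + 2 * Real.pi * (j : ℝ)) / (s C : ℝ))) ^ 2
            - (R C ((t + 2 * Real.pi * (j : ℝ)) / (s C : ℝ))) ^ 2 : ℝ) : ℂ)
            + Complex.I * ((z - H C ((t + 2 * Real.pi * (j : ℝ)) / (s C : ℝ)) : ℝ) : ℂ))) =
        MvPolynomial.eval
          ![(x : ℂ), (y : ℂ), (z : ℂ), Complex.exp (Complex.I * (t : ℂ)),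
            Complex.exp (-(Complex.I * (t : ℂ)))] p := by
  have hmem := Subalgebra.prod_apply₄_mem (expPolySubalgebra 1) univ fun C _ =>
    prod_loopBraidFactor_mem (hF C) (hG C) (hH C) (hR C) (hs C)
  obtain ⟨p, hp⟩ := expPolySubalgebra.exists_eval_eq hmem
  simp only [Nat.cast_one, div_one] at hp
  exact ⟨p, hp⟩

/-- Lemma 3.1 of the paper. The loop braid product
`∏_C ∏_{j=1}^{s_C} P_{C,j}(x,y,z,t)`, with
`P_{C,j} = (x − F_C(τ_j))² + (y − G_C(τ_j))² − R_C(τ_j)² + i(z − H_C(τ_j))` and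
`τ_j = (t+2π(j−1))/s_C`, is a polynomial in `x`, `y`, `z`, `exp(it)` and `exp(−it)`. -/
theorem loop_braid_product_is_polynomial {ι : Type*} [Fintype ι] [Nonempty ι]
    (s : ι → ℕ) (hs : ∀ C, 1 ≤ s C)
    (F G H R : ι → ℝ → ℝ)
    (hF : ∀ C, IsRealTrigPoly (F C)) (hG : ∀ C, IsRealTrigPoly (G C))
    (hH : ∀ C, IsRealTrigPoly (H C)) (hR : ∀ C, IsRealTrigPoly (R C))
    (hRpos : ∀ C τ, 0 < R C τ) :
    ∃ p : MvPolynomial (Fin 5) ℂ,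
      ∀ (x y z t : ℝ),
        (∏ C, ∏ j ∈ Finset.range (s C),
          ((((x - F C ((t + 2 * Real.pi * (j : ℝ)) / (s C : ℝ))) ^ 2
            + (y - G C ((t + 2 * Real.pi * (j : ℝ)) / (s C : ℝ))) ^ 2
            - (R C ((t + 2 * Real.pi * (j : ℝ)) / (s C : ℝ))) ^ 2 : ℝ) : ℂ)
            + Complex.I * ((z - H C ((t + 2 * Real.pi * (j : ℝ)) / (s C : ℝ)) : ℝ) : ℂ))) =
        MvPolynomial.eval
          ![(x : ℂ), (y : ℂ), (z : ℂ), Complex.exp (Complex.I * (t : ℂ)),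
            Complex.exp (-(Complex.I * (t : ℂ)))] p :=
  loop_braid_product_is_polynomial_general s hs F G H R hF hG hH hR
end

section
/- Let I be a finite nonempty index set; for each C ∈ I let s_C ≥ 1 be an integer and let F_C, G_C, H_C : ℝ → ℝ and R_C : ℝ → ℝ be real trigonometric polynomials with R_C(τ) > 0 for all τ. For C ∈ I, 1 ≤ j ≤ s_C, and τ_j := (t + 2π(j−1))/s_C, set P_{C,j}(x,y,z,t) = (x − F_C(τ_j))² + (y − G_C(τ_j))² − R_C(τ_j)² + i·(z − H_C(τ_j)). Then there exist a natural number m and a polynomial q ∈ ℂ[X, Y, Z, V] such that for all x, y, z, t ∈ ℝ: exp(i m t) · ∏_{C∈I} ∏_{j=1}^{s_C} P_{C,j}(x, y, z, t) = q(x, y, z, exp(i t)). In other words, the product equals exp(−i m t) times a polynomial that is holomorphic in the single complex variable v = exp(i t). -/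
/-!
Each factor `P(x, y, z, τ)` is `v⁻ⁿ p(v)` for `v = e^{iτ}` and a polynomial `p` with coefficients
in `ℂ[x, y, z]`, because the trigonometric polynomials `F, G, H, R` are Laurent polynomials in `v`.
With `w = e^{it/s}` and `ζ = e^{2πi/s}` we have `e^{iτ_j} = w ζ^j`, so `∏_j P(τ_j)` is a constant
times `w^{-sn} Q(w)` where `Q(X) = ∏_j p(ζ^j X)`. Since `Q(ζ X) = Q(X)`, only the monomials `X^{ks}`
occur in `Q`, so `Q(w)` is a polynomial in `w^s = e^{it}`.
-/

open Finset Complex Real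

open Polynomial

theorem Finset.prod_range_shift_eq_of_apply_eq {M : Type*} [CommMonoid M] (g : ℕ → M) {s : ℕ}
    (hg : g s = g 0) : ∏ j ∈ range s, g (j + 1) = ∏ j ∈ range s, g j := by
  cases s with
  | zero => simp
  | succ n => rw [prod_range_succ, prod_range_succ', hg]

namespace Polynomial

variable {R : Type*} [CommRing R]

theorem prod_comp_C_pow_mul_X_comp_C_mul_X (p : R[X]) {c : R} {s : ℕ} (hc : c ^ s = 1) :
    (∏ j ∈ range s, p.comp (C c ^ j * X)).comp (C c * X) =
      ∏ j ∈ range s, p.comp (C c ^ j * X) := by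
  rw [prod_comp]
  refine (Finset.prod_congr rfl fun j _ => ?_).trans
    (prod_range_shift_eq_of_apply_eq (fun j => p.comp (C c ^ j * X)) ?_)
  · rw [comp_assoc, mul_comp, X_comp, pow_comp, C_comp, pow_succ, mul_assoc]
  · simp [← C_pow, hc]

theorem expand_contract_of_comp_eq_self {K : Type*} [Field K] [Algebra K R] {ζ : K} {s : ℕ}
    (hζ : IsPrimitiveRoot ζ s) (hs : s ≠ 0) {Q : R[X]}
    (hQ : Q.comp (C (algebraMap K R ζ) * X) = Q) : expand R s (contract s Q) = Q := by
  ext k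
  rw [coeff_expand (Nat.pos_of_ne_zero hs), coeff_contract hs]
  split_ifs with hk
  · rw [Nat.div_mul_cancel hk]
  · have hunit : IsUnit (algebraMap K R (ζ ^ k - 1)) :=
      (sub_ne_zero.mpr fun h => hk ((hζ.pow_eq_one_iff_dvd k).mp h)).isUnit.map _
    have hfix : Q.coeff k * algebraMap K R ζ ^ k = Q.coeff k := by
      rw [← comp_C_mul_X_coeff, hQ]
    rw [eq_comm, ← hunit.mul_left_eq_zero, map_sub, map_pow, map_one, mul_sub_one, hfix, sub_self]

end Polynomial

theorem Complex.exp_I_mul_add_two_pi_mul_div (t : ℝ) (j : ℕ) {s : ℕ} (hs : s ≠ 0) :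
    exp (I * ((t + 2 * π * j) / s : ℝ)) = exp (I * t / s) * exp (2 * π * I / s) ^ j := by
  rw [← Complex.exp_nat_mul, ← Complex.exp_add]
  congr 1
  push_cast
  field_simp

theorem MvPolynomial.eval_snoc_eval₂_rename_castSucc {A : Type*} [CommSemiring A] {n : ℕ}
    (p : (MvPolynomial (Fin n) A)[X]) (a : Fin n → A) (v : A) :
    eval (Fin.snoc a v) (p.eval₂ (rename Fin.castSucc).toRingHom (X (Fin.last n))) =
      p.eval₂ (eval a) v := by
  rw [Polynomial.hom_eval₂, MvPolynomial.eval_X, Fin.snoc_last]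
  congr 1
  ext <;> simp

section LaurentExpI

variable (R : Type*) [CommRing R] [Algebra ℂ R]

/-- The functions `τ ↦ v⁻ⁿ p(v)` with `v = e^{iτ}` and `p ∈ R[X]`, i.e. the Laurent polynomials
in `e^{iτ}` with coefficients in `R`. -/
def laurentExpI : Subalgebra ℂ (ℝ → R) where
  carrier := {f | ∃ (n : ℕ) (p : R[X]), ∀ τ : ℝ,
    algebraMap ℂ R (exp (I * τ)) ^ n * f τ = p.eval (algebraMap ℂ R (exp (I * τ)))}
  mul_mem' := by
    rintro f g ⟨m, p, hp⟩ ⟨n, q, hq⟩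
    refine ⟨m + n, p * q, fun τ => ?_⟩
    rw [eval_mul, ← hp, ← hq, pow_add, Pi.mul_apply]
    ring
  add_mem' := by
    rintro f g ⟨m, p, hp⟩ ⟨n, q, hq⟩
    refine ⟨m + n, X ^ n * p + X ^ m * q, fun τ => ?_⟩
    simp only [eval_add, eval_mul, eval_pow, eval_X, ← hp, ← hq, Pi.add_apply]
    ring
  algebraMap_mem' c := ⟨0, C (algebraMap ℂ R c), fun τ => by simp⟩

variable {R}

namespace laurentExpI

theorem const_mem (r : R) : (fun _ : ℝ => r) ∈ laurentExpI R :=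
  ⟨0, C r, fun τ => by simp⟩

theorem map_mem {S : Type*} [CommRing S] [Algebra ℂ S] (φ : R →ₐ[ℂ] S) {f : ℝ → R}
    (hf : f ∈ laurentExpI R) : φ ∘ f ∈ laurentExpI S := by
  obtain ⟨n, p, hp⟩ := hf
  refine ⟨n, p.map φ, fun τ => ?_⟩
  rw [← φ.commutes, Function.comp_apply, ← map_pow, ← map_mul, hp]
  exact (eval_map_apply (φ : R →+* S) _).symm

theorem expI_mem : (fun τ : ℝ => exp (I * τ)) ∈ laurentExpI ℂ :=
  ⟨0, X, fun τ => by simp⟩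

theorem expI_neg_mem : (fun τ : ℝ => exp (-(I * τ))) ∈ laurentExpI ℂ :=
  ⟨1, 1, fun τ => by simp [← Complex.exp_add]⟩

theorem cos_nat_mul_mem (k : ℕ) : (fun τ : ℝ => (Real.cos (k * τ) : ℂ)) ∈ laurentExpI ℂ := by
  have h : (fun τ : ℝ => (Real.cos (k * τ) : ℂ)) =
      (2⁻¹ : ℂ) • ((fun τ : ℝ => exp (I * τ)) ^ k + (fun τ : ℝ => exp (-(I * τ))) ^ k) := by
    ext τ
    simp only [Pi.smul_apply, Pi.add_apply, Pi.pow_apply, smul_eq_mul, ← Complex.exp_nat_mul]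
    push_cast
    rw [Complex.cos]
    ring_nf
  rw [h]
  exact Subalgebra.smul_mem _ (add_mem (pow_mem expI_mem k) (pow_mem expI_neg_mem k)) _

theorem sin_nat_mul_mem (k : ℕ) : (fun τ : ℝ => (Real.sin (k * τ) : ℂ)) ∈ laurentExpI ℂ := by
  have h : (fun τ : ℝ => (Real.sin (k * τ) : ℂ)) =
      (I / 2) • ((fun τ : ℝ => exp (-(I * τ))) ^ k - (fun τ : ℝ => exp (I * τ)) ^ k) := by
    ext τ
    simp only [Pi.smul_apply, Pi.sub_apply, Pi.pow_apply, smul_eq_mul, ← Complex.exp_nat_mul]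
    push_cast
    rw [Complex.sin]
    ring_nf
  rw [h]
  exact Subalgebra.smul_mem _ (sub_mem (pow_mem expI_neg_mem k) (pow_mem expI_mem k)) _

theorem ofReal_comp_mem_of_isRealTrigPoly {T : ℝ → ℝ} (hT : IsRealTrigPoly T) :
    (fun τ => (T τ : ℂ)) ∈ laurentExpI ℂ := by
  obtain ⟨N, a, b, hT⟩ := hT
  have h : (fun τ => (T τ : ℂ)) = algebraMap ℂ (ℝ → ℂ) (a 0) + ∑ k ∈ Icc 1 N,
      ((a k : ℂ) • (fun τ : ℝ => (Real.cos (k * τ) : ℂ)) +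
        (b k : ℂ) • (fun τ : ℝ => (Real.sin (k * τ) : ℂ))) := by
    ext τ
    simp [hT, Finset.sum_apply]
  rw [h]
  exact add_mem (Subalgebra.algebraMap_mem _ _) (sum_mem fun k _ =>
    add_mem (Subalgebra.smul_mem _ (cos_nat_mul_mem k) _)
      (Subalgebra.smul_mem _ (sin_nat_mul_mem k) _))

theorem prod_range_rotate_mem {f : ℝ → R} (hf : f ∈ laurentExpI R) (s : ℕ) :
    (fun t => ∏ j ∈ range s, f ((t + 2 * π * j) / s)) ∈ laurentExpI R := by
  rcases eq_or_ne s 0 with rfl | hs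
  · simp only [range_zero, prod_empty]
    exact one_mem _
  obtain ⟨n, p, hp⟩ := hf
  set ζ : ℂ := exp (2 * π * I / s)
  have hζ : IsPrimitiveRoot ζ s := isPrimitiveRoot_exp s hs
  set Q : R[X] := ∏ j ∈ range s, p.comp (C (algebraMap ℂ R ζ) ^ j * X)
  have hQ : expand R s (contract s Q) = Q := expand_contract_of_comp_eq_self hζ hs
    (prod_comp_C_pow_mul_X_comp_C_mul_X p (by rw [← map_pow, hζ.pow_eq_one, map_one]))
  set c : ℂ := (∏ j ∈ range s, ζ ^ j) ^ n
  have hc : c ≠ 0 := pow_ne_zero _ (prod_ne_zero_iff.mpr fun j _ => pow_ne_zero _ (exp_ne_zero _))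
  refine ⟨n, C (algebraMap ℂ R c⁻¹) * contract s Q, fun t => ?_⟩
  set w : ℂ := exp (I * t / s)
  have hws : w ^ s = exp (I * t) := by
    rw [← Complex.exp_nat_mul]
    congr 1
    field_simp
  have hQw : Q.eval (algebraMap ℂ R w) =
      algebraMap ℂ R (exp (I * t) ^ n * c) * ∏ j ∈ range s, f ((t + 2 * π * j) / s) := by
    have hrot (j : ℕ) : p.eval (algebraMap ℂ R (ζ ^ j * w)) =
        algebraMap ℂ R ((ζ ^ j * w) ^ n) * f ((t + 2 * π * j) / s) := by
      rw [mul_comm, ← exp_I_mul_add_two_pi_mul_div t j hs, map_pow, hp]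
    simp only [Q, eval_prod, eval_comp, eval_mul, eval_C, eval_X, ← map_pow, ← map_mul, hrot,
      prod_mul_distrib, ← map_prod]
    rw [prod_pow, prod_mul_distrib, prod_const, card_range, ← hws, mul_pow, mul_comm _ c]
  have hQe : (contract s Q).eval (algebraMap ℂ R (exp (I * t))) = Q.eval (algebraMap ℂ R w) := by
    rw [← hws, map_pow, ← expand_eval, hQ]
  rw [eval_mul, eval_C, hQe, hQw, ← mul_assoc, ← map_mul, mul_comm _ c, inv_mul_cancel_left₀ hc,
    map_pow]

end laurentExpI

end LaurentExpI

/-- The paper's factor `P(x, y, z, τ)`, with `x, y, z` the variables `X 0, X 1, X 2`. -/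
noncomputable def loopFactor (F G H R : ℝ → ℝ) (τ : ℝ) : MvPolynomial (Fin 3) ℂ :=
  (MvPolynomial.X 0 - MvPolynomial.C (F τ : ℂ)) ^ 2
    + (MvPolynomial.X 1 - MvPolynomial.C (G τ : ℂ)) ^ 2 - MvPolynomial.C (R τ : ℂ) ^ 2
    + MvPolynomial.C I * (MvPolynomial.X 2 - MvPolynomial.C (H τ : ℂ))

theorem laurentExpI.loopFactor_mem {F G H R : ℝ → ℝ} (hF : IsRealTrigPoly F)
    (hG : IsRealTrigPoly G) (hH : IsRealTrigPoly H) (hR : IsRealTrigPoly R) :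
    loopFactor F G H R ∈ laurentExpI (MvPolynomial (Fin 3) ℂ) := by
  have coord (i : Fin 3) := const_mem (MvPolynomial.X i : MvPolynomial (Fin 3) ℂ)
  have trig {T : ℝ → ℝ} (hT : IsRealTrigPoly T) :=
    map_mem (Algebra.ofId ℂ (MvPolynomial (Fin 3) ℂ)) (ofReal_comp_mem_of_isRealTrigPoly hT)
  exact add_mem (sub_mem (add_mem (pow_mem (sub_mem (coord 0) (trig hF)) 2)
    (pow_mem (sub_mem (coord 1) (trig hG)) 2)) (pow_mem (trig hR) 2))
    (mul_mem (Subalgebra.algebraMap_mem _ I) (sub_mem (coord 2) (trig hH)))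

theorem loop_braid_product_semiholomorphic_general {ι : Type*} [Fintype ι]
    (s : ι → ℕ)
    (F G H R : ι → ℝ → ℝ)
    (hF : ∀ C, IsRealTrigPoly (F C)) (hG : ∀ C, IsRealTrigPoly (G C))
    (hH : ∀ C, IsRealTrigPoly (H C)) (hR : ∀ C, IsRealTrigPoly (R C)) :
    ∃ (m : ℕ) (q : MvPolynomial (Fin 4) ℂ),
      ∀ (x y z t : ℝ),
        Complex.exp (Complex.I * (m : ℂ) * (t : ℂ)) *
        (∏ C, ∏ j ∈ Finset.range (s C),
          ((((x - F C ((t + 2 * Real.pi * (j : ℝ)) / (s C : ℝ))) ^ 2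
            + (y - G C ((t + 2 * Real.pi * (j : ℝ)) / (s C : ℝ))) ^ 2
            - (R C ((t + 2 * Real.pi * (j : ℝ)) / (s C : ℝ))) ^ 2 : ℝ) : ℂ)
            + Complex.I * ((z - H C ((t + 2 * Real.pi * (j : ℝ)) / (s C : ℝ)) : ℝ) : ℂ))) =
        MvPolynomial.eval
          ![(x : ℂ), (y : ℂ), (z : ℂ), Complex.exp (Complex.I * (t : ℂ))] q := by
  obtain ⟨n, p, hp⟩ : (∏ C, fun t => ∏ j ∈ range (s C),
      loopFactor (F C) (G C) (H C) (R C) ((t + 2 * π * j) / s C)) ∈ laurentExpI _ :=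
    prod_mem fun C _ => laurentExpI.prod_range_rotate_mem
      (laurentExpI.loopFactor_mem (hF C) (hG C) (hH C) (hR C)) (s C)
  refine ⟨n, p.eval₂ (MvPolynomial.rename Fin.castSucc).toRingHom (MvPolynomial.X (Fin.last 3)),
    fun x y z t => ?_⟩
  have hv : ![(x : ℂ), y, z, exp (I * t)] = Fin.snoc ![(x : ℂ), y, z] (exp (I * t)) := by simp
  have hpt := congrArg (MvPolynomial.eval ![(x : ℂ), y, z]) (hp t)
  rw [← eval₂_hom, MvPolynomial.algebraMap_eq, MvPolynomial.eval_C] at hpt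
  have hexp : exp (I * n * t) = exp (I * t) ^ n := by
    rw [← Complex.exp_nat_mul]
    ring_nf
  rw [hv, MvPolynomial.eval_snoc_eval₂_rename_castSucc, ← hpt, map_mul, map_pow,
    MvPolynomial.eval_C, hexp, Finset.prod_apply]
  simp [loopFactor]

/-- algebraic kernel of Proposition 3.9 of the paper. There are `m : ℕ`
and a polynomial `q ∈ ℂ[X,Y,Z,V]` such that `exp(imt) · ∏_C ∏_j P_{C,j}(x,y,z,t)`
equals `q(x, y, z, exp(it))`; i.e. the loop braid product is `exp(−imt)` times a
polynomial holomorphic in the single complex variable `v = exp(it)`. -/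
theorem loop_braid_product_semiholomorphic {ι : Type*} [Fintype ι] [Nonempty ι]
    (s : ι → ℕ) (hs : ∀ C, 1 ≤ s C)
    (F G H R : ι → ℝ → ℝ)
    (hF : ∀ C, IsRealTrigPoly (F C)) (hG : ∀ C, IsRealTrigPoly (G C))
    (hH : ∀ C, IsRealTrigPoly (H C)) (hR : ∀ C, IsRealTrigPoly (R C))
    (hRpos : ∀ C τ, 0 < R C τ) :
    ∃ (m : ℕ) (q : MvPolynomial (Fin 4) ℂ),
      ∀ (x y z t : ℝ),
        Complex.exp (Complex.I * (m : ℂ) * (t : ℂ)) *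
        (∏ C, ∏ j ∈ Finset.range (s C),
          ((((x - F C ((t + 2 * Real.pi * (j : ℝ)) / (s C : ℝ))) ^ 2
            + (y - G C ((t + 2 * Real.pi * (j : ℝ)) / (s C : ℝ))) ^ 2
            - (R C ((t + 2 * Real.pi * (j : ℝ)) / (s C : ℝ))) ^ 2 : ℝ) : ℂ)
            + Complex.I * ((z - H C ((t + 2 * Real.pi * (j : ℝ)) / (s C : ℝ)) : ℝ) : ℂ))) =
        MvPolynomial.eval
          ![(x : ℂ), (y : ℂ), (z : ℂ), Complex.exp (Complex.I * (t : ℂ))] q :=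
  loop_braid_product_semiholomorphic_general s F G H R hF hG hH hR
end

section
/- Let N ≥ 1 and let t_1, …, t_N ∈ ℝ be points such that exp(i t_1), …, exp(i t_N) are pairwise distinct, and let z_1, …, z_N and z'_1, …, z'_N be arbitrary real numbers. Then there exists a real trigonometric polynomial H of degree at most N such that H(t_i) = z_i and H'(t_i) = z'_i for every i = 1, …, N. -/
/-!
The functions `ℓᵢ(x) = ∏_{j ≠ i} sin((x - tⱼ)/2) / sin((tᵢ - tⱼ)/2)` satisfy `ℓᵢ(tⱼ) = δᵢⱼ`, and
their squares vanish to second order at the nodes `tⱼ`, `j ≠ i`. Hence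
`H = ∑ᵢ ℓᵢ² (zᵢ + wᵢ sin(x - tᵢ))` with `wᵢ = z'ᵢ - 2 zᵢ ℓᵢ'(tᵢ)` has the prescribed values and
derivatives. Since `sin²((x - tⱼ)/2) = (1 - cos(x - tⱼ))/2`, every summand is a product of `N`
trigonometric polynomials of degree one; degrees add under products because the trigonometric
polynomials of degree `≤ n` are spanned by the `cos(kx + φ)` with `|k| ≤ n`, and
`2 cos a cos b = cos(a - b) + cos(a + b)`.
-/

open Finset Real

def trigPoly (n : ℕ) : Submodule ℝ (ℝ → ℝ) where
  carrier := {H | ∃ a b : ℕ → ℝ, ∀ x : ℝ,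
    H x = a 0 + ∑ k ∈ Icc 1 n, (a k * cos (k * x) + b k * sin (k * x))}
  add_mem' := by
    rintro F G ⟨a, b, hF⟩ ⟨a', b', hG⟩
    refine ⟨a + a', b + b', fun x => ?_⟩
    simp only [Pi.add_apply, hF, hG, add_mul, sum_add_distrib]
    ring
  zero_mem' := ⟨0, 0, by simp⟩
  smul_mem' := by
    rintro c F ⟨a, b, hF⟩
    refine ⟨c • a, c • b, fun x => ?_⟩
    simp only [Pi.smul_apply, smul_eq_mul, hF, mul_add, mul_sum, mul_assoc]

theorem cos_natCast_mul_add_mem_trigPoly {k n : ℕ} (hk : k ≤ n) (φ : ℝ) :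
    (fun x => cos (k * x + φ)) ∈ trigPoly n := by
  refine ⟨fun j => if j = k then cos φ else 0, fun j => if j = k then -sin φ else 0,
    fun x => ?_⟩
  simp only [ite_mul, zero_mul, sum_add_distrib, sum_ite_eq', mem_Icc]
  rcases Nat.eq_zero_or_pos k with rfl | hk0
  · simp
  · simp only [cos_add, hk0.ne, ↓reduceIte, Nat.one_le_iff_ne_zero.2 hk0.ne', hk, and_self, neg_mul,
      zero_add]
    ring

theorem cos_intCast_mul_add_mem_trigPoly {k : ℤ} {n : ℕ} (hk : |k| ≤ n) (φ : ℝ) :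
    (fun x => cos (k * x + φ)) ∈ trigPoly n := by
  obtain ⟨m, rfl | rfl⟩ := Int.eq_nat_or_neg k
  · exact_mod_cast cos_natCast_mul_add_mem_trigPoly (by simpa using hk) φ
  · convert cos_natCast_mul_add_mem_trigPoly (k := m) (by simpa using hk) (-φ) using 2 with x
    rw [← cos_neg]
    push_cast
    ring_nf

def trigMonomials (n : ℕ) : Set (ℝ → ℝ) :=
  {f | ∃ k : ℤ, |k| ≤ n ∧ ∃ φ : ℝ, f = fun x => cos (k * x + φ)}

theorem span_trigMonomials (n : ℕ) : Submodule.span ℝ (trigMonomials n) = trigPoly n := by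
  refine le_antisymm (Submodule.span_le.2 ?_) ?_
  · rintro _ ⟨k, hk, φ, rfl⟩
    exact cos_intCast_mul_add_mem_trigPoly hk φ
  · rintro H ⟨a, b, hH⟩
    have hmem : ∀ k : ℕ, k ≤ n → ∀ φ : ℝ,
        (fun x => cos (k * x + φ)) ∈ Submodule.span ℝ (trigMonomials n) :=
      fun k hk φ => Submodule.subset_span ⟨k, by simpa using hk, φ, by simp⟩
    have hH' : H = a 0 • (fun x => cos ((0 : ℕ) * x + 0)) +
        ∑ k ∈ Icc 1 n, (a k • (fun x => cos (k * x + 0)) +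
          b k • fun x => cos (k * x + -(π / 2))) := by
      funext x
      simp [hH, Finset.sum_apply, ← sub_eq_add_neg, cos_sub_pi_div_two]
    rw [hH']
    refine add_mem (Submodule.smul_mem _ _ (hmem 0 n.zero_le 0)) (sum_mem fun k hk => ?_)
    have hkn : k ≤ n := (mem_Icc.1 hk).2
    exact add_mem (Submodule.smul_mem _ _ (hmem k hkn _)) (Submodule.smul_mem _ _ (hmem k hkn _))

theorem cos_mul_cos_mem_trigPoly {m n : ℕ} {k l : ℤ} (hk : |k| ≤ m) (hl : |l| ≤ n) (φ ψ : ℝ) :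
    (fun x => cos (k * x + φ) * cos (l * x + ψ)) ∈ trigPoly (m + n) := by
  have hprod : (fun x => cos (k * x + φ) * cos (l * x + ψ)) =
      (1 / 2 : ℝ) • (fun x => cos (((k + l : ℤ) : ℝ) * x + (φ + ψ))) +
      (1 / 2 : ℝ) • (fun x => cos (((k - l : ℤ) : ℝ) * x + (φ - ψ))) := by
    funext x
    simp only [Pi.add_apply, Pi.smul_apply, smul_eq_mul, Int.cast_add, Int.cast_sub]
    rw [show (k + l : ℝ) * x + (φ + ψ) = (k * x + φ) + (l * x + ψ) by ring,
      show (k - l : ℝ) * x + (φ - ψ) = (k * x + φ) - (l * x + ψ) by ring]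
    linarith [two_mul_cos_mul_cos (k * x + φ) (l * x + ψ)]
  rw [hprod]
  refine add_mem (Submodule.smul_mem _ _ (cos_intCast_mul_add_mem_trigPoly ?_ _))
    (Submodule.smul_mem _ _ (cos_intCast_mul_add_mem_trigPoly ?_ _)) <;> push_cast
  · exact (abs_add_le k l).trans (add_le_add hk hl)
  · exact (abs_sub k l).trans (add_le_add hk hl)

instance : SetLike.GradedMonoid trigPoly where
  one_mem := by simpa [Pi.one_def] using cos_natCast_mul_add_mem_trigPoly (le_refl 0) 0
  mul_mem m n F G hF hG := by
    rw [← span_trigMonomials] at hF hG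
    have hFG := Submodule.mul_mem_mul hF hG
    rw [Submodule.span_mul_span] at hFG
    refine Submodule.span_le.2 ?_ hFG
    rintro _ ⟨_, ⟨k, hk, φ, rfl⟩, _, ⟨l, hl, ψ, rfl⟩, rfl⟩
    exact cos_mul_cos_mem_trigPoly hk hl φ ψ

theorem exists_hermite_of_lagrange {ι : Type*} [Fintype ι] {t : ι → ℝ} {l s : ι → ℝ → ℝ}
    (hl : ∀ i, Differentiable ℝ (l i)) (hs : ∀ i, Differentiable ℝ (s i))
    (hl_self : ∀ i, l i (t i) = 1) (hl_ne : ∀ i j, i ≠ j → l i (t j) = 0)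
    (hs_self : ∀ i, s i (t i) = 0) (hs_deriv : ∀ i, deriv (s i) (t i) = 1) (z z' : ι → ℝ) :
    ∃ w : ι → ℝ, ∀ j, ∑ i, l i (t j) ^ 2 * (z i + w i * s i (t j)) = z j ∧
      deriv (fun x => ∑ i, l i x ^ 2 * (z i + w i * s i x)) (t j) = z' j := by
  classical
  set w : ι → ℝ := fun i => z' i - 2 * z i * deriv (l i) (t i)
  refine ⟨w, fun j => ⟨?_, ?_⟩⟩
  · rw [sum_eq_single j (fun i _ hij => by rw [hl_ne i j hij]; ring) (by simp), hl_self,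
      hs_self]
    ring
  · have hterm := fun i => ((hl i (t j)).hasDerivAt.fun_pow 2).fun_mul
      (((hs i (t j)).hasDerivAt.const_mul (w i)).const_add (z i))
    rw [(HasDerivAt.fun_sum fun i _ => hterm i).deriv,
      sum_eq_single j (fun i _ hij => by simp [hl_ne i j hij]) (by simp)]
    simp only [Nat.cast_ofNat, hl_self, Nat.add_one_sub_one, one_pow, mul_one, hs_self, mul_zero,
      add_zero, hs_deriv, one_mul, w]
    ring

theorem sin_sq_half_sub_mem_trigPoly (a : ℝ) :
    (fun x => sin ((x - a) / 2) ^ 2) ∈ trigPoly 1 := by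
  have h : (fun x => sin ((x - a) / 2) ^ 2) =
      (1 / 2 : ℝ) • (fun x => cos ((0 : ℕ) * x + 0)) +
      (-1 / 2 : ℝ) • (fun x => cos ((1 : ℕ) * x + -a)) := by
    funext x
    simp only [sin_sq_eq_half_sub, Pi.add_apply, Pi.smul_apply, smul_eq_mul, Nat.cast_zero,
      Nat.cast_one, zero_mul, one_mul, add_zero, cos_zero]
    rw [show 2 * ((x - a) / 2) = x + -a by ring]
    ring
  rw [h]
  exact add_mem (Submodule.smul_mem _ _ (cos_natCast_mul_add_mem_trigPoly zero_le_one _))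
    (Submodule.smul_mem _ _ (cos_natCast_mul_add_mem_trigPoly le_rfl _))

theorem const_add_mul_sin_sub_mem_trigPoly (c w a : ℝ) :
    (fun x => c + w * sin (x - a)) ∈ trigPoly 1 := by
  have h : (fun x => c + w * sin (x - a)) =
      c • (fun x => cos ((0 : ℕ) * x + 0)) +
      w • (fun x => cos ((1 : ℕ) * x + (-a - π / 2))) := by
    funext x
    simp only [Pi.add_apply, Pi.smul_apply, smul_eq_mul, Nat.cast_zero, Nat.cast_one, zero_mul,
      one_mul, add_zero, cos_zero, mul_one]
    rw [← add_sub_assoc, ← sub_eq_add_neg, cos_sub_pi_div_two]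
  rw [h]
  exact add_mem (Submodule.smul_mem _ _ (cos_natCast_mul_add_mem_trigPoly zero_le_one _))
    (Submodule.smul_mem _ _ (cos_natCast_mul_add_mem_trigPoly le_rfl _))

theorem sin_half_sub_ne_zero_of_exp_ne {a b : ℝ}
    (h : Complex.exp (Complex.I * a) ≠ Complex.exp (Complex.I * b)) :
    sin ((a - b) / 2) ≠ 0 := by
  intro hsin
  obtain ⟨n, hn⟩ := sin_eq_zero_iff.1 hsin
  refine h (Complex.exp_eq_exp_iff_exists_int.2 ⟨n, ?_⟩)
  have hab : (a : ℂ) = b + n * (2 * π) := by exact_mod_cast (by linarith : a = b + n * (2 * π))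
  rw [hab]
  ring

section trigLagrange

variable {ι : Type*} [Fintype ι] [DecidableEq ι] (t : ι → ℝ)

noncomputable def trigLagrange (i : ι) (x : ℝ) : ℝ :=
  ∏ j ∈ univ.erase i, sin ((x - t j) / 2) / sin ((t i - t j) / 2)

theorem differentiable_trigLagrange (i : ι) : Differentiable ℝ (trigLagrange t i) := by
  unfold trigLagrange
  fun_prop

theorem trigLagrange_apply_of_ne {i j : ι} (hij : i ≠ j) : trigLagrange t i (t j) = 0 :=
  prod_eq_zero (mem_erase.2 ⟨hij.symm, mem_univ j⟩) (by simp)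

variable {t}

theorem trigLagrange_self (ht : ∀ i j, i ≠ j → sin ((t i - t j) / 2) ≠ 0) (i : ι) :
    trigLagrange t i (t i) = 1 :=
  prod_eq_one fun j hj => div_self (ht i j (ne_of_mem_erase hj).symm)

variable (t)

theorem trigLagrange_sq_mem_trigPoly (i : ι) :
    (fun x => trigLagrange t i x ^ 2) ∈ trigPoly (Fintype.card ι - 1) := by
  have h : (fun x => trigLagrange t i x ^ 2) =
      ∏ j ∈ univ.erase i, (sin ((t i - t j) / 2) ^ 2)⁻¹ •
        fun x => sin ((x - t j) / 2) ^ 2 := by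
    funext x
    simp [trigLagrange, Finset.prod_apply, ← prod_pow, div_eq_inv_mul, mul_pow, inv_pow]
  have hmem := SetLike.prod_mem_graded trigPoly (fun _ => 1)
    (fun j => (sin ((t i - t j) / 2) ^ 2)⁻¹ • fun x => sin ((x - t j) / 2) ^ 2)
    fun j (_ : j ∈ univ.erase i) => Submodule.smul_mem _ _ (sin_sq_half_sub_mem_trigPoly (t j))
  rwa [← h, sum_const, smul_eq_mul, mul_one, card_erase_of_mem (mem_univ i), card_univ] at hmem

end trigLagrange

theorem trig_hermite_interpolation_general (N : ℕ) (t : Fin N → ℝ)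
    (ht : Function.Injective fun i => Complex.exp (Complex.I * (t i : ℂ)))
    (z z' : Fin N → ℝ) :
    ∃ H : ℝ → ℝ,
      (∃ a b : ℕ → ℝ, ∀ x : ℝ,
        H x = a 0 + ∑ k ∈ Finset.Icc 1 N, (a k * Real.cos (k * x) + b k * Real.sin (k * x))) ∧
      ∀ i, H (t i) = z i ∧ deriv H (t i) = z' i := by
  have hsin : ∀ i j, i ≠ j → sin ((t i - t j) / 2) ≠ 0 :=
    fun i j hij => sin_half_sub_ne_zero_of_exp_ne (ht.ne hij)
  obtain ⟨w, hw⟩ := exists_hermite_of_lagrange (s := fun i x => sin (x - t i))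
    (differentiable_trigLagrange t) (fun i => by fun_prop) (trigLagrange_self hsin)
    (fun i j => trigLagrange_apply_of_ne t) (by simp) (by simp) z z'
  refine ⟨fun x => ∑ i, trigLagrange t i x ^ 2 * (z i + w i * sin (x - t i)), ?_, hw⟩
  change _ ∈ trigPoly N
  rw [← Finset.sum_fn]
  refine sum_mem fun i _ => ?_
  have hdeg : Fintype.card (Fin N) - 1 + 1 = N := by
    rw [Fintype.card_fin]
    exact Nat.sub_add_cancel i.pos
  have hmem := SetLike.mul_mem_graded (trigLagrange_sq_mem_trigPoly t i)
    (const_add_mul_sin_sub_mem_trigPoly (z i) (w i) (t i))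
  rwa [hdeg] at hmem

/-- trigonometric Hermite interpolation. Given `N ≥ 1` points
`t_1, …, t_N` that are pairwise distinct modulo `2π`, and arbitrary prescribed values
`z_i` and derivative values `z'_i`, there is a real trigonometric polynomial `H` of
degree at most `N` with `H(t_i) = z_i` and `H'(t_i) = z'_i` for all `i`. -/
theorem trig_hermite_interpolation (N : ℕ) (hN : 1 ≤ N) (t : Fin N → ℝ)
    (ht : Function.Injective fun i => Complex.exp (Complex.I * (t i : ℂ)))
    (z z' : Fin N → ℝ) :
    ∃ H : ℝ → ℝ,
      (∃ a b : ℕ → ℝ, ∀ x : ℝ,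
        H x = a 0 + ∑ k ∈ Finset.Icc 1 N, (a k * Real.cos (k * x) + b k * Real.sin (k * x))) ∧
      ∀ i, H (t i) = z i ∧ deriv H (t i) = z' i :=
  trig_hermite_interpolation_general N t ht z z'
end

section
/- Let g : ℝ³ × ℝ → ℂ be twice continuously differentiable with g(x, y, z, t + 2π) = g(x, y, z, t) for all (x, y, z, t). Write a = Re g and b = Im g, and let ∇ denote the gradient with respect to the three spatial variables (x, y, z). For each t ∈ ℝ define the vector field V_t : ℝ³ → ℝ³ by V_t(x,y,z) = (∇a × ∇b)(x,y,z,t) / (1 + a(x,y,z,t)² + b(x,y,z,t)²), where × is the cross product on ℝ³. Then: (i) V_{t+2π} = V_t for all t ∈ ℝ; (ii) the divergence of V_t vanishes identically, i.e. ∇·V_t = 0 on ℝ³ for every t; and (iii) V_t(x,y,z) · ∇a(x,y,z,t) = 0 and V_t(x,y,z) · ∇b(x,y,z,t) = 0 at every point, so V_t is tangent to every level set of g(·,·,·,t), in particular to the zero set {(x,y,z) : g(x,y,z,t) = 0}. -/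
/-!
Write `V_t = h(a, b) • (∇a × ∇b)` with `h(x, y) = (1 + x² + y²)⁻¹`. Periodicity is inherited
from `g`, and orthogonality to `∇a` and `∇b` holds because a triple product with a repeated
vector vanishes. For the divergence, `div (φ • u) = ∇φ ⬝ u + φ div u`, and
`div (∇a × ∇b) = ∇b ⬝ curl ∇a - ∇a ⬝ curl ∇b = 0` since the mixed second partials of a `C²`
function commute; finally `∇(h(a, b)) = ∂₁h ∇a + ∂₂h ∇b` is again orthogonal to `∇a × ∇b`.
-/

open Finset Complex Real

/-- Partial derivative of `f : ℝ³ → ℝ` in the `i`-th coordinate direction at `p`. -/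
noncomputable def pderiv3 (f : (Fin 3 → ℝ) → ℝ) (p : Fin 3 → ℝ) (i : Fin 3) : ℝ :=
  deriv (fun s : ℝ => f (Function.update p i s)) (p i)

/-- Gradient of `f : ℝ³ → ℝ` at `p`. -/
noncomputable def grad3 (f : (Fin 3 → ℝ) → ℝ) (p : Fin 3 → ℝ) : Fin 3 → ℝ :=
  fun i => pderiv3 f p i

open scoped Matrix

section PartialDerivatives

variable {f f' : (Fin 3 → ℝ) → ℝ} {p : Fin 3 → ℝ}

theorem HasFDerivAt.hasDerivAt_comp_update {L : (Fin 3 → ℝ) →L[ℝ] ℝ} (hf : HasFDerivAt f L p)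
    (i : Fin 3) :
    HasDerivAt (fun s => f (Function.update p i s)) (L (Pi.single i 1)) (p i) := by
  rw [← Function.update_eq_self i p] at hf
  exact hf.comp_hasDerivAt (p i) (hasDerivAt_update p i (p i))

theorem pderiv3_eq_fderiv (hf : DifferentiableAt ℝ f p) (i : Fin 3) :
    pderiv3 f p i = fderiv ℝ f p (Pi.single i 1) :=
  hf.hasFDerivAt.hasDerivAt_comp_update i |>.deriv

theorem pderiv3_sub (hf : DifferentiableAt ℝ f p) (hf' : DifferentiableAt ℝ f' p) (i : Fin 3) :
    pderiv3 (fun q => f q - f' q) p i = pderiv3 f p i - pderiv3 f' p i := by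
  rw [pderiv3_eq_fderiv (f := fun q => f q - f' q) (hf.sub hf'), pderiv3_eq_fderiv hf,
    pderiv3_eq_fderiv hf', fderiv_fun_sub hf hf', sub_apply]

theorem pderiv3_mul (hf : DifferentiableAt ℝ f p) (hf' : DifferentiableAt ℝ f' p) (i : Fin 3) :
    pderiv3 (fun q => f q * f' q) p i = pderiv3 f p i * f' p + f p * pderiv3 f' p i := by
  rw [pderiv3_eq_fderiv (f := fun q => f q * f' q) (hf.mul hf'), pderiv3_eq_fderiv hf,
    pderiv3_eq_fderiv hf', fderiv_fun_mul hf hf', add_apply, smul_apply, smul_apply, smul_eq_mul,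
    smul_eq_mul]
  ring

theorem pderiv3_eq_fderiv_fderiv (hf : ContDiff ℝ 2 f) (i j : Fin 3) :
    pderiv3 (fun q => pderiv3 f q j) p i =
      fderiv ℝ (fderiv ℝ f) p (Pi.single i 1) (Pi.single j 1) := by
  have hf' : Differentiable ℝ (fderiv ℝ f) :=
    (hf.fderiv_right (by norm_num)).differentiable one_ne_zero
  simp only [pderiv3_eq_fderiv (hf.differentiable two_ne_zero _)]
  exact ((ContinuousLinearMap.apply ℝ ℝ (Pi.single j 1)).hasFDerivAt.comp p
    (hf' p).hasFDerivAt).hasDerivAt_comp_update i |>.deriv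

theorem pderiv3_pderiv3_comm (hf : ContDiff ℝ 2 f) (i j : Fin 3) :
    pderiv3 (fun q => pderiv3 f q j) p i = pderiv3 (fun q => pderiv3 f q i) p j := by
  rw [pderiv3_eq_fderiv_fderiv hf, pderiv3_eq_fderiv_fderiv hf]
  exact hf.contDiffAt.isSymmSndFDerivAt (by simp) _ _

theorem differentiable_grad3_apply (hf : ContDiff ℝ 2 f) (j : Fin 3) :
    Differentiable ℝ (fun q => grad3 f q j) := by
  simp only [grad3, pderiv3_eq_fderiv (hf.differentiable two_ne_zero _)]
  exact ((hf.fderiv_right (by norm_num)).differentiable one_ne_zero).clm_apply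
    (differentiable_const _)

end PartialDerivatives

noncomputable def div3 (u : (Fin 3 → ℝ) → Fin 3 → ℝ) (p : Fin 3 → ℝ) : ℝ :=
  ∑ i, pderiv3 (fun q => u q i) p i

noncomputable def curl3 (u : (Fin 3 → ℝ) → Fin 3 → ℝ) (p : Fin 3 → ℝ) : Fin 3 → ℝ :=
  ![pderiv3 (fun q => u q 2) p 1 - pderiv3 (fun q => u q 1) p 2,
    pderiv3 (fun q => u q 0) p 2 - pderiv3 (fun q => u q 2) p 0,
    pderiv3 (fun q => u q 1) p 0 - pderiv3 (fun q => u q 0) p 1]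

section VectorCalculus

variable {φ a b : (Fin 3 → ℝ) → ℝ} {u v : (Fin 3 → ℝ) → Fin 3 → ℝ} {p : Fin 3 → ℝ}

theorem div3_smul (hφ : DifferentiableAt ℝ φ p)
    (hu : ∀ i, DifferentiableAt ℝ (fun q => u q i) p) :
    div3 (fun q => φ q • u q) p = grad3 φ p ⬝ᵥ u p + φ p * div3 u p := by
  simp only [div3, grad3, dotProduct, Pi.smul_apply, smul_eq_mul, pderiv3_mul hφ (hu _),
    Finset.mul_sum, ← Finset.sum_add_distrib]

theorem div3_cross (hu : ∀ i, DifferentiableAt ℝ (fun q => u q i) p)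
    (hv : ∀ i, DifferentiableAt ℝ (fun q => v q i) p) :
    div3 (fun q => u q ⨯₃ v q) p = v p ⬝ᵥ curl3 u p - u p ⬝ᵥ curl3 v p := by
  simp only [div3, curl3, dotProduct, cross_apply, Fin.sum_univ_three, Matrix.cons_val_zero,
    Matrix.cons_val_one, Matrix.cons_val_two, Matrix.head_cons, Matrix.tail_cons]
  simp (disch := fun_prop) only [pderiv3_sub, pderiv3_mul]
  ring

theorem differentiableAt_cross_apply (hu : ∀ i, DifferentiableAt ℝ (fun q => u q i) p)
    (hv : ∀ i, DifferentiableAt ℝ (fun q => v q i) p) (i : Fin 3) :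
    DifferentiableAt ℝ (fun q => (u q ⨯₃ v q) i) p := by
  fin_cases i <;>
    simp only [Fin.zero_eta, Fin.mk_one, Fin.reduceFinMk, Fin.isValue, cross_apply,
      Matrix.cons_val_zero, Matrix.cons_val_one, Matrix.cons_val] <;>
    fun_prop

theorem curl3_grad3 (ha : ContDiff ℝ 2 a) : curl3 (grad3 a) p = 0 := by
  simp [curl3, grad3, pderiv3_pderiv3_comm ha 1 2, pderiv3_pderiv3_comm ha 0 2,
    pderiv3_pderiv3_comm ha 0 1]

theorem div3_cross_grad3 (ha : ContDiff ℝ 2 a) (hb : ContDiff ℝ 2 b) :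
    div3 (fun q => grad3 a q ⨯₃ grad3 b q) p = 0 := by
  rw [div3_cross (u := grad3 a) (v := grad3 b) (fun i => differentiable_grad3_apply ha i p)
    (fun i => differentiable_grad3_apply hb i p), curl3_grad3 ha, curl3_grad3 hb,
    dotProduct_zero, dotProduct_zero, sub_zero]

theorem grad3_comp_prodMk {h : ℝ × ℝ → ℝ} (hh : DifferentiableAt ℝ h (a p, b p))
    (ha : DifferentiableAt ℝ a p) (hb : DifferentiableAt ℝ b p) :
    grad3 (fun q => h (a q, b q)) p =
      fderiv ℝ h (a p, b p) (1, 0) • grad3 a p + fderiv ℝ h (a p, b p) (0, 1) • grad3 b p := by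
  have hab : DifferentiableAt ℝ (fun q => (a q, b q)) p := ha.prodMk hb
  ext i
  simp only [grad3, Pi.add_apply, Pi.smul_apply, smul_eq_mul,
    pderiv3_eq_fderiv (f := fun q => h (a q, b q)) (hh.comp p hab), pderiv3_eq_fderiv ha,
    pderiv3_eq_fderiv hb, fderiv_fun_comp p hh hab, ha.fderiv_prodMk hb,
    ContinuousLinearMap.comp_apply, ContinuousLinearMap.prod_apply]
  set L := fderiv ℝ h (a p, b p)
  have hsplit (x y : ℝ) : ((x, y) : ℝ × ℝ) = x • (1, 0) + y • (0, 1) := by simp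
  rw [hsplit, map_add, map_smul, map_smul, smul_eq_mul, smul_eq_mul, mul_comm, mul_comm _ (L _)]

theorem div3_smul_cross_grad3 {h : ℝ × ℝ → ℝ} (hh : Differentiable ℝ h) (ha : ContDiff ℝ 2 a)
    (hb : ContDiff ℝ 2 b) :
    div3 (fun q => h (a q, b q) • (grad3 a q ⨯₃ grad3 b q)) p = 0 := by
  have ha' := ha.differentiable two_ne_zero
  have hb' := hb.differentiable two_ne_zero
  have hcross := differentiableAt_cross_apply (fun i => differentiable_grad3_apply ha i p)
    (fun i => differentiable_grad3_apply hb i p)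
  rw [div3_smul (φ := fun q => h (a q, b q)) ((hh _).comp p ((ha' p).prodMk (hb' p))) hcross,
    div3_cross_grad3 ha hb, mul_zero, add_zero, grad3_comp_prodMk (hh _) (ha' p) (hb' p),
    add_dotProduct, smul_dotProduct, smul_dotProduct, dot_self_cross, dot_cross_self,
    smul_zero, smul_zero, add_zero]

end VectorCalculus

/-- Proposition 1.3 of the paper, analytic content. For a `C²`,
`2π`-periodic-in-time function `g : ℝ³ × ℝ → ℂ` with `a = Re g`, `b = Im g`, the field
`V_t = (∇a × ∇b)/(1 + a² + b²)` is `2π`-periodic in `t`, divergence free in the space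
variables, and orthogonal to `∇a` and `∇b`, hence tangent to every level set of
`g(·,·,·,t)`, in particular to its zero set. -/
theorem ranada_field_properties (g : (Fin 3 → ℝ) → ℝ → ℂ)
    (hg : ContDiff ℝ 2 (fun q : (Fin 3 → ℝ) × ℝ => g q.1 q.2))
    (hper : ∀ (p : Fin 3 → ℝ) (t : ℝ), g p (t + 2 * Real.pi) = g p t)
    (V : ℝ → (Fin 3 → ℝ) → Fin 3 → ℝ)
    (hV : ∀ (t : ℝ) (p : Fin 3 → ℝ),
      V t p = (1 + (g p t).re ^ 2 + (g p t).im ^ 2)⁻¹ •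
        crossProduct (grad3 (fun q => (g q t).re) p) (grad3 (fun q => (g q t).im) p)) :
    (∀ (t : ℝ) (p : Fin 3 → ℝ), V (t + 2 * Real.pi) p = V t p) ∧
    (∀ (t : ℝ) (p : Fin 3 → ℝ), ∑ i, pderiv3 (fun q => V t q i) p i = 0) ∧
    (∀ (t : ℝ) (p : Fin 3 → ℝ),
      (∑ i, V t p i * grad3 (fun q => (g q t).re) p i) = 0 ∧
      (∑ i, V t p i * grad3 (fun q => (g q t).im) p i) = 0) := by
  have hslice (t : ℝ) : ContDiff ℝ 2 (fun q => g q t) :=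
    hg.comp (contDiff_id.prodMk contDiff_const)
  have hweight : Differentiable ℝ (fun z : ℝ × ℝ => (1 + z.1 ^ 2 + z.2 ^ 2)⁻¹) := fun z => by
    fun_prop (disch := positivity)
  refine ⟨fun t p => by simp only [hV, hper], fun t p => ?_, fun t p => ⟨?_, ?_⟩⟩
  · change div3 (V t) p = 0
    rw [show V t = _ from funext (hV t)]
    exact div3_smul_cross_grad3 hweight (reCLM.contDiff.comp (hslice t))
      (imCLM.contDiff.comp (hslice t))
  · change V t p ⬝ᵥ _ = 0
    rw [hV, smul_dotProduct, dotProduct_comm, dot_self_cross, smul_zero]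
  · change V t p ⬝ᵥ _ = 0
    rw [hV, smul_dotProduct, dotProduct_comm, dot_cross_self, smul_zero]
end

section
/- Let n ∈ ℤ, let s ≥ 1 be an integer, and let c_1, …, c_s ∈ ℂ. Define g : ℂ × ℝ → ℂ by g(u, χ) = ∏_{j=1}^{s} ( u − exp(i n χ)·c_j ). Suppose (u, χ) is a point with g(u, χ) ≠ 0 and ∂g/∂u (u, χ) = 0. Then ∂g/∂χ (u, χ) = i·n·s·g(u, χ); in particular the logarithmic derivative (∂g/∂χ)/g at such a point is purely imaginary with imaginary part n·s, which is nonzero whenever n ≠ 0. -/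
open Finset Complex Real

/-!
Write `g(u, χ) = P(u, e^{inχ})` with `P(u, t) = ∏ (u - t c_j)`. Since `P` is homogeneous of
degree `s`, Euler's relation gives `t ∂ₜP = s P - u ∂ᵤP`, and by the chain rule
`∂g/∂χ = i n t ∂ₜP = i n (s g - u ∂g/∂u)`, which is `i n s g` at a critical point in `u`.
-/

section ProdSub

variable {ι : Type*} [DecidableEq ι] (S : Finset ι)

theorem sum_mul_prod_erase_sub {R : Type*} [CommRing R] (a : ι → R) (w : R) :
    ∑ j ∈ S, a j * ∏ k ∈ S.erase j, (w - a k) =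
      w * ∑ j ∈ S, ∏ k ∈ S.erase j, (w - a k) - S.card * ∏ j ∈ S, (w - a j) := by
  have hsplit : ∀ j ∈ S, a j * ∏ k ∈ S.erase j, (w - a k) =
      w * ∏ k ∈ S.erase j, (w - a k) - ∏ k ∈ S, (w - a k) := fun j hj => by
    rw [← mul_prod_erase S (fun k => w - a k) hj]; ring
  rw [sum_congr rfl hsplit, sum_sub_distrib, ← mul_sum, sum_const, nsmul_eq_mul]

variable {𝕜 : Type*} [NontriviallyNormedField 𝕜]

theorem hasDerivAt_prod_sub (a : ι → 𝕜) (w : 𝕜) :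
    HasDerivAt (fun w => ∏ j ∈ S, (w - a j)) (∑ j ∈ S, ∏ k ∈ S.erase j, (w - a k)) w := by
  simpa using HasDerivAt.fun_finsetProd (u := S) fun j _ => (hasDerivAt_id w).sub_const (a j)

theorem hasDerivAt_prod_sub_mul (u : 𝕜) (c : ι → 𝕜) (t : 𝕜) :
    HasDerivAt (fun t => ∏ j ∈ S, (u - t * c j))
      (-∑ j ∈ S, c j * ∏ k ∈ S.erase j, (u - t * c k)) t := by
  simpa [mul_comm] using HasDerivAt.fun_finsetProd (u := S) fun j _ =>
    ((hasDerivAt_id t).mul_const (c j)).const_sub u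

theorem mul_deriv_prod_sub_mul (u : 𝕜) (c : ι → 𝕜) (t : 𝕜) :
    t * -∑ j ∈ S, c j * ∏ k ∈ S.erase j, (u - t * c k) =
      S.card * ∏ j ∈ S, (u - t * c j) - u * ∑ j ∈ S, ∏ k ∈ S.erase j, (u - t * c k) := by
  rw [mul_neg, mul_sum]
  simp_rw [← mul_assoc]
  rw [sum_mul_prod_erase_sub S (fun j => t * c j) u]
  ring

end ProdSub

theorem hasDerivAt_cexp_mul_ofReal (a : ℂ) (x : ℝ) :
    HasDerivAt (fun x : ℝ => exp (a * x)) (a * exp (a * x)) x := by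
  simpa [mul_comm] using (((hasDerivAt_id x).ofReal_comp).const_mul a).cexp

/-- end of Section 4 of the paper. For
`g(u,χ) = ∏_{j=1}^{s} (u − exp(inχ)·c_j)`, at any point where `g ≠ 0` and `∂g/∂u = 0`
one has `∂g/∂χ = i·n·s·g`; in particular the logarithmic derivative `(∂g/∂χ)/g` there
is purely imaginary with imaginary part `n·s`, nonzero whenever `n ≠ 0`. -/
theorem spinning_braid_no_argument_critical_points (n : ℤ) (s : ℕ) (hs : 1 ≤ s)
    (c : Fin s → ℂ) (g : ℂ → ℝ → ℂ)
    (hg : ∀ (u : ℂ) (χ : ℝ),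
      g u χ = ∏ j, (u - Complex.exp (Complex.I * (n : ℂ) * (χ : ℂ)) * c j))
    (u : ℂ) (χ : ℝ) (hne : g u χ ≠ 0) (hcrit : deriv (fun w : ℂ => g w χ) u = 0) :
    deriv (fun x : ℝ => g u x) χ = Complex.I * (n : ℂ) * (s : ℂ) * g u χ ∧
    (deriv (fun x : ℝ => g u x) χ / g u χ).re = 0 ∧
    (deriv (fun x : ℝ => g u x) χ / g u χ).im = (n : ℝ) * (s : ℝ) ∧
    (n ≠ 0 → (deriv (fun x : ℝ => g u x) χ / g u χ).im ≠ 0) := by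
  obtain rfl : g = fun u (χ : ℝ) => ∏ j, (u - exp (I * n * χ) * c j) := funext₂ hg
  beta_reduce at hne hcrit ⊢
  set e := exp (I * n * χ)
  have hsum_zero : ∑ j, ∏ k ∈ univ.erase j, (u - e * c k) = 0 :=
    (hasDerivAt_prod_sub univ (fun j => e * c j) u).deriv ▸ hcrit
  have hχ : HasDerivAt (fun x : ℝ => ∏ j, (u - exp (I * n * x) * c j))
      ((-∑ j, c j * ∏ k ∈ univ.erase j, (u - e * c k)) * (I * n * e)) χ :=
    HasDerivAt.comp (h₂ := fun t => ∏ j, (u - t * c j)) χ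
      (hasDerivAt_prod_sub_mul univ u c e) (hasDerivAt_cexp_mul_ofReal (I * n) χ)
  have hderiv : deriv (fun x : ℝ => ∏ j, (u - exp (I * n * x) * c j)) χ =
      I * n * s * ∏ j, (u - e * c j) := by
    rw [hχ.deriv, mul_comm, mul_assoc, mul_deriv_prod_sub_mul, hsum_zero, card_fin]
    ring
  have hlog : deriv (fun x : ℝ => ∏ j, (u - exp (I * n * x) * c j)) χ / ∏ j, (u - e * c j) =
      I * n * s := by
    rw [hderiv, mul_div_assoc, div_self hne, mul_one]
  refine ⟨hderiv, ?_, ?_, fun hn => ?_⟩ <;> rw [hlog] <;> simp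
  exact ⟨hn, by omega⟩
end
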